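/- arXiv:2103.03549 — 9 statements merged into one kernel-verified Lean document; each statement's English description precedes it below -/
import Mathlib

section
/- Let (X, ‖·‖₁) and (X, ‖·‖₂) be two normed-space structures on the same real vector space X, let (Y, ‖·‖_Y) be a normed space, let B := {u ∈ X : ‖u‖₁ ≤ 1}, and let T : X → Y be a linear operator. If the restriction T|_B : (B, ‖·‖₂) → (Y, ‖·‖_Y) is continuous (where B carries the metric induced by ‖·‖₂), then for every ε > 0 there exists a constant C_ε > 0 such that ‖Tu‖_Y ≤ ε‖u‖₁ + C_ε‖u‖₂ for all u ∈ X. -/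
/-- If `T` restricted to the closed unit ball `B` of `(X, ‖·‖₁)`
is continuous with respect to the metric induced by `‖·‖₂`, then `T` satisfies the
generalized Ehrling type inequality with the pair `(‖·‖₁, ‖·‖₂)`. -/
theorem ehrling_of_continuous_on_ball
    {X Y : Type*} [AddCommGroup X] [Module ℝ X]
    [NormedAddCommGroup Y] [NormedSpace ℝ Y]
    (n₁ n₂ : X → ℝ)
    (h₁zero : ∀ u : X, n₁ u = 0 ↔ u = 0)
    (h₁smul : ∀ (a : ℝ) (u : X), n₁ (a • u) = |a| * n₁ u)
    (h₁add : ∀ u v : X, n₁ (u + v) ≤ n₁ u + n₁ v)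
    (h₂zero : ∀ u : X, n₂ u = 0 ↔ u = 0)
    (h₂smul : ∀ (a : ℝ) (u : X), n₂ (a • u) = |a| * n₂ u)
    (h₂add : ∀ u v : X, n₂ (u + v) ≤ n₂ u + n₂ v)
    (T : X →ₗ[ℝ] Y)
    (hcont : ∀ u : X, n₁ u ≤ 1 → ∀ ε > (0 : ℝ), ∃ δ > (0 : ℝ), ∀ v : X, n₁ v ≤ 1 →
        n₂ (v - u) < δ → ‖T v - T u‖ < ε) :
    ∀ ε > (0 : ℝ), ∃ C > (0 : ℝ), ∀ u : X, ‖T u‖ ≤ ε * n₁ u + C * n₂ u := by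
  intro ε hε
  have h₁0 : n₁ (0 : X) = 0 := (h₁zero 0).mpr rfl
  have h₂0 : n₂ (0 : X) = 0 := (h₂zero 0).mpr rfl
  have h₁nonneg : ∀ u : X, 0 ≤ n₁ u := by
    intro u
    have h1 := h₁add u (-u)
    have h2 := h₁smul (-1) u
    rw [add_neg_cancel, h₁0] at h1
    rw [neg_one_smul] at h2
    simp only [abs_neg, abs_one, one_mul] at h2
    linarith
  have h₂nonneg : ∀ u : X, 0 ≤ n₂ u := by
    intro u
    have h1 := h₂add u (-u)
    have h2 := h₂smul (-1) u
    rw [add_neg_cancel, h₂0] at h1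
    rw [neg_one_smul] at h2
    simp only [abs_neg, abs_one, one_mul] at h2
    linarith
  obtain ⟨δ, hδ, hδ'⟩ := hcont 0 (by rw [h₁0]; norm_num) ε hε
  refine ⟨2 * ε / δ, by positivity, ?_⟩
  intro u
  by_cases hu : u = 0
  · subst hu; simp [h₁0, h₂0]
  · have hn1 : 0 < n₁ u :=
      lt_of_le_of_ne (h₁nonneg u) (fun h => hu ((h₁zero u).mp h.symm))
    have hn2 : 0 < n₂ u :=
      lt_of_le_of_ne (h₂nonneg u) (fun h => hu ((h₂zero u).mp h.symm))
    set t := min (1 / n₁ u) (δ / (2 * n₂ u)) with ht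
    have htpos : 0 < t := lt_min (by positivity) (by positivity)
    have h1 : n₁ (t • u) ≤ 1 := by
      rw [h₁smul, abs_of_pos htpos]
      calc t * n₁ u ≤ (1 / n₁ u) * n₁ u :=
            mul_le_mul_of_nonneg_right (min_le_left _ _) (h₁nonneg u)
        _ = 1 := by field_simp
    have h2 : n₂ (t • u - 0) < δ := by
      rw [sub_zero, h₂smul, abs_of_pos htpos]
      calc t * n₂ u ≤ (δ / (2 * n₂ u)) * n₂ u :=
            mul_le_mul_of_nonneg_right (min_le_right _ _) (h₂nonneg u)
        _ = δ / 2 := by field_simp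
        _ < δ := by linarith
    have key := hδ' (t • u) h1 h2
    rw [map_zero, sub_zero, map_smul, norm_smul, Real.norm_eq_abs,
      abs_of_pos htpos] at key
    have hTu : ‖T u‖ < ε / t := (lt_div_iff₀' htpos).mpr key
    have hle : ε / t ≤ ε * n₁ u + (2 * ε / δ) * n₂ u := by
      rcases min_cases (1 / n₁ u) (δ / (2 * n₂ u)) with ⟨h, _⟩ | ⟨h, _⟩
      · rw [ht, h]
        have he : ε / (1 / n₁ u) = ε * n₁ u := by field_simp
        rw [he]
        have : 0 ≤ 2 * ε / δ * n₂ u := by positivity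
        linarith
      · rw [ht, h]
        have he : ε / (δ / (2 * n₂ u)) = (2 * ε / δ) * n₂ u := by
          field_simp
        rw [he]
        have : 0 ≤ ε * n₁ u := by positivity
        linarith
    linarith
end

section
/- Let (X, ‖·‖₁) and (X, ‖·‖₂) be two normed-space structures on the same real vector space X, let (Y, ‖·‖_Y) be a normed space, let B := {u ∈ X : ‖u‖₁ ≤ 1}, and let T : X → Y be a linear operator. If for every ε > 0 there exists a constant C_ε > 0 such that ‖Tu‖_Y ≤ ε‖u‖₁ + C_ε‖u‖₂ for all u ∈ X, then the restriction T|_B : (B, ‖·‖₂) → (Y, ‖·‖_Y) is continuous (where B carries the metric induced by ‖·‖₂). -/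
/-- If `T` satisfies the generalized Ehrling type inequality with the pair
`(‖·‖₁, ‖·‖₂)`, then `T` restricted to the closed unit ball `B` of `(X, ‖·‖₁)` is continuous
with respect to the metric induced by `‖·‖₂`. -/
theorem continuous_on_ball_of_ehrling
    {X Y : Type*} [AddCommGroup X] [Module ℝ X]
    [NormedAddCommGroup Y] [NormedSpace ℝ Y]
    (n₁ n₂ : X → ℝ)
    (h₁zero : ∀ u : X, n₁ u = 0 ↔ u = 0)
    (h₁smul : ∀ (a : ℝ) (u : X), n₁ (a • u) = |a| * n₁ u)
    (h₁add : ∀ u v : X, n₁ (u + v) ≤ n₁ u + n₁ v)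
    (h₂zero : ∀ u : X, n₂ u = 0 ↔ u = 0)
    (h₂smul : ∀ (a : ℝ) (u : X), n₂ (a • u) = |a| * n₂ u)
    (h₂add : ∀ u v : X, n₂ (u + v) ≤ n₂ u + n₂ v)
    (T : X →ₗ[ℝ] Y)
    (hEhrling : ∀ ε > (0 : ℝ), ∃ C > (0 : ℝ), ∀ u : X, ‖T u‖ ≤ ε * n₁ u + C * n₂ u) :
    ∀ u : X, n₁ u ≤ 1 → ∀ ε > (0 : ℝ), ∃ δ > (0 : ℝ), ∀ v : X, n₁ v ≤ 1 →
      n₂ (v - u) < δ → ‖T v - T u‖ < ε := by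
  intro u hu ε hε
  obtain ⟨C, hC, hineq⟩ := hEhrling (ε / 4) (by linarith)
  refine ⟨ε / (2 * C), by positivity, fun v hv hd => ?_⟩
  have hneg : n₁ (-u) = n₁ u := by
    have := h₁smul (-1) u; simpa using this
  have h1 : n₁ (v - u) ≤ 2 := by
    have := h₁add v (-u)
    rw [hneg] at this
    simp only [sub_eq_add_neg]
    linarith
  have key := hineq (v - u)
  rw [map_sub] at key
  have h2 : C * n₂ (v - u) < C * (ε / (2 * C)) := by
    exact mul_lt_mul_of_pos_left hd hC
  have h3 : C * (ε / (2 * C)) = ε / 2 := by field_simp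
  nlinarith
end

section
/- (Ehrling inequality.) Let (X, ‖·‖_X), (Y, ‖·‖_Y), (Z, ‖·‖_Z) be normed spaces, let θ : X → Y be an injective compact linear operator and τ : Y → Z an injective continuous linear operator. Then for every ε > 0 there exists a constant C_ε > 0 such that ‖θ(u)‖_Y ≤ ε‖u‖_X + C_ε‖(τ∘θ)(u)‖_Z for all u ∈ X. -/
/-- **Ehrling inequality.** If `θ : X → Y` is an injective compact linear
operator and `τ : Y → Z` is an injective continuous linear operator, then for every `ε > 0`
there is `C_ε > 0` with `‖θ u‖_Y ≤ ε ‖u‖_X + C_ε ‖τ (θ u)‖_Z` for all `u ∈ X`. -/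
theorem ehrling_inequality
    {X Y Z : Type*} [NormedAddCommGroup X] [NormedSpace ℝ X]
    [NormedAddCommGroup Y] [NormedSpace ℝ Y]
    [NormedAddCommGroup Z] [NormedSpace ℝ Z]
    (θ : X →ₗ[ℝ] Y) (hθinj : Function.Injective θ)
    (hθcpt : ∀ s : Set X, Bornology.IsBounded s → IsCompact (closure (θ '' s)))
    (τ : Y →L[ℝ] Z) (hτinj : Function.Injective τ) :
    ∀ ε > (0 : ℝ), ∃ C > (0 : ℝ), ∀ u : X, ‖θ u‖ ≤ ε * ‖u‖ + C * ‖τ (θ u)‖ := by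
  intro ε hε
  by_contra h
  push_neg at h
  have hv : ∀ n : ℕ, ∃ v : X, ‖v‖ = 1 ∧ ε + (n + 1) * ‖τ (θ v)‖ < ‖θ v‖ := by
    intro n
    obtain ⟨u, hu⟩ := h (n + 1) (by positivity)
    have hu0 : u ≠ 0 := by
      rintro rfl
      simp at hu
    have hn : (0 : ℝ) < ‖u‖ := norm_pos_iff.mpr hu0
    refine ⟨‖u‖⁻¹ • u, ?_, ?_⟩
    · simp [norm_smul, inv_mul_cancel₀ hn.ne']
    · rw [map_smul, map_smul, norm_smul, norm_smul, norm_inv, norm_norm]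
      have key := mul_lt_mul_of_pos_left hu (inv_pos.mpr hn)
      have hc : ‖u‖⁻¹ * ‖u‖ = 1 := inv_mul_cancel₀ hn.ne'
      nlinarith [key, hc]
  choose v hv1 hv2 using hv
  have hb : Bornology.IsBounded (Metric.closedBall (0 : X) 1) := Metric.isBounded_closedBall
  have hcpt := hθcpt _ hb
  have hmem : ∀ n, θ (v n) ∈ closure (θ '' Metric.closedBall (0 : X) 1) := fun n =>
    subset_closure ⟨v n, by simp [hv1 n], rfl⟩
  obtain ⟨y, hy, φ, hφ, hconv⟩ := hcpt.tendsto_subseq hmem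
  obtain ⟨M, hM⟩ := hcpt.isBounded.exists_norm_le
  -- the τ-images tend to 0
  have hτ0 : Filter.Tendsto (fun n => ‖τ (θ (v n))‖) Filter.atTop (nhds 0) := by
    have hle : ∀ n : ℕ, ‖τ (θ (v n))‖ ≤ M / (n + 1) := by
      intro n
      have h1 : (n + 1 : ℝ) * ‖τ (θ (v n))‖ < M := lt_of_lt_of_le
        (by linarith [hv2 n]) (hM _ (hmem n))
      rw [le_div_iff₀ (by positivity)]
      nlinarith
    have hlim : Filter.Tendsto (fun n : ℕ => M / (n + 1)) Filter.atTop (nhds 0) :=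
      Filter.Tendsto.div_atTop tendsto_const_nhds (Filter.tendsto_atTop_add_const_right _ 1
        tendsto_natCast_atTop_atTop)
    exact squeeze_zero (fun n => norm_nonneg _) hle hlim
  have hτy : Filter.Tendsto (fun n => τ (θ (v (φ n)))) Filter.atTop (nhds (τ y)) :=
    (τ.continuous.tendsto y).comp hconv
  have hτy0 : τ y = 0 := by
    have h2 : Filter.Tendsto (fun n => τ (θ (v (φ n)))) Filter.atTop (nhds 0) := by
      rw [← norm_zero (E := ℝ)] at hτ0
      have := (tendsto_zero_iff_norm_tendsto_zero.mpr (by simpa using hτ0)).comp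
        hφ.tendsto_atTop
      exact this
    exact tendsto_nhds_unique hτy h2
  have hy0 : y = 0 := hτinj (by simpa using hτy0)
  have hnorm : Filter.Tendsto (fun n => ‖θ (v (φ n))‖) Filter.atTop (nhds ‖y‖) :=
    (continuous_norm.tendsto y).comp hconv
  have hεle : ε ≤ ‖y‖ := by
    refine ge_of_tendsto hnorm (Filter.Eventually.of_forall fun n => ?_)
    have := hv2 (φ n)
    nlinarith [norm_nonneg (τ (θ (v (φ n))))]
  rw [hy0, norm_zero] at hεle
  linarith
end

section
/- Let (X, ‖·‖_X), (Y, ‖·‖_Y), (Z, ‖·‖_Z) be normed spaces, let θ : X → Y be an injective compact linear operator and τ : Y → Z an injective continuous linear operator, and let B := {u ∈ X : ‖u‖_X ≤ 1}. Equip X with the additional norm |u|_X := ‖(τ∘θ)(u)‖_Z. Then the restriction θ|_B : (B, |·|_X) → (Y, ‖·‖_Y) is continuous, where B carries the metric induced by |·|_X. -/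
/-- If `θ : X → Y` is an injective compact linear operator and `τ : Y → Z`
is an injective continuous linear operator, then the restriction of `θ` to the closed unit
ball `B` of `(X, ‖·‖_X)` is continuous from `(B, |·|_X)` to `(Y, ‖·‖_Y)`, where
`|u|_X := ‖τ (θ u)‖_Z`. -/
theorem theta_continuous_on_ball
    {X Y Z : Type*} [NormedAddCommGroup X] [NormedSpace ℝ X]
    [NormedAddCommGroup Y] [NormedSpace ℝ Y]
    [NormedAddCommGroup Z] [NormedSpace ℝ Z]
    (θ : X →ₗ[ℝ] Y) (hθinj : Function.Injective θ)
    (hθcpt : ∀ s : Set X, Bornology.IsBounded s → IsCompact (closure (θ '' s)))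
    (τ : Y →L[ℝ] Z) (hτinj : Function.Injective τ) :
    ∀ u : X, ‖u‖ ≤ 1 → ∀ ε > (0 : ℝ), ∃ δ > (0 : ℝ), ∀ v : X, ‖v‖ ≤ 1 →
      ‖τ (θ v) - τ (θ u)‖ < δ → ‖θ v - θ u‖ < ε := by
  intro u hu ε hε
  by_contra h
  push_neg at h
  choose v hv1 hv2 hv3 using fun n : ℕ => h (1 / (n + 1)) (by positivity)
  have hK : IsCompact (closure (θ '' Metric.closedBall 0 1)) :=
    hθcpt _ Metric.isBounded_closedBall
  have hmem : ∀ n, θ (v n) ∈ closure (θ '' Metric.closedBall 0 1) := fun n =>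
    subset_closure ⟨v n, by simpa [Metric.mem_closedBall, dist_zero_right] using hv1 n, rfl⟩
  obtain ⟨y, hy, φ, hφ, hconv⟩ := hK.tendsto_subseq hmem
  -- τ (θ (v n)) → τ (θ u)
  have htend0 : Filter.Tendsto (fun n => ‖τ (θ (v n)) - τ (θ u)‖) Filter.atTop (nhds 0) := by
    refine squeeze_zero (fun n => norm_nonneg _) (fun n => (hv2 n).le) ?_
    exact tendsto_one_div_add_atTop_nhds_zero_nat
  have htend : Filter.Tendsto (fun n => τ (θ (v n))) Filter.atTop (nhds (τ (θ u))) :=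
    tendsto_iff_norm_sub_tendsto_zero.mpr htend0
  have htendsub : Filter.Tendsto (fun n => τ (θ (v (φ n)))) Filter.atTop (nhds (τ (θ u))) :=
    htend.comp hφ.tendsto_atTop
  have htendy : Filter.Tendsto (fun n => τ (θ (v (φ n)))) Filter.atTop (nhds (τ y)) :=
    (τ.continuous.tendsto y).comp hconv
  have hyu : y = θ u := hτinj (tendsto_nhds_unique htendy htendsub)
  subst hyu
  have hnorm : Filter.Tendsto (fun n => ‖θ (v (φ n)) - θ u‖) Filter.atTop (nhds 0) :=
    tendsto_iff_norm_sub_tendsto_zero.mp hconv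
  have : ε ≤ 0 := ge_of_tendsto hnorm (Filter.Eventually.of_forall fun n => hv3 (φ n))
  linarith
end

section
/- Let (X, ‖·‖_X), (Y, ‖·‖_Y), (Z, ‖·‖_Z) be normed spaces, let θ : X → Y be an injective compact linear operator and τ : Y → Z an injective continuous linear operator, and let B := {u ∈ X : ‖u‖_X ≤ 1}. Equip X with the norm |u|_X := ‖(τ∘θ)(u)‖_Z. Then the identity map of B is a homeomorphism between the metric space B with distance d₁(u,v) = ‖θ(u)−θ(v)‖_Y and the metric space B with distance d₂(u,v) = |u−v|_X. -/
/-- Under the assumptions of the Ehrling lemma, the identity map of the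
closed unit ball `B` of `(X, ‖·‖_X)` is a homeomorphism between the metric
`d₁(u,v) = ‖θ u − θ v‖_Y` and the metric `d₂(u,v) = |u − v|_X = ‖τ (θ (u − v))‖_Z`,
i.e. the identity map is continuous in both directions. -/
theorem ball_metrics_homeomorphic
    {X Y Z : Type*} [NormedAddCommGroup X] [NormedSpace ℝ X]
    [NormedAddCommGroup Y] [NormedSpace ℝ Y]
    [NormedAddCommGroup Z] [NormedSpace ℝ Z]
    (θ : X →ₗ[ℝ] Y) (hθinj : Function.Injective θ)
    (hθcpt : ∀ s : Set X, Bornology.IsBounded s → IsCompact (closure (θ '' s)))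
    (τ : Y →L[ℝ] Z) (hτinj : Function.Injective τ) :
    (∀ u : X, ‖u‖ ≤ 1 → ∀ ε > (0 : ℝ), ∃ δ > (0 : ℝ), ∀ v : X, ‖v‖ ≤ 1 →
        ‖θ v - θ u‖ < δ → ‖τ (θ v) - τ (θ u)‖ < ε) ∧
    (∀ u : X, ‖u‖ ≤ 1 → ∀ ε > (0 : ℝ), ∃ δ > (0 : ℝ), ∀ v : X, ‖v‖ ≤ 1 →
        ‖τ (θ v) - τ (θ u)‖ < δ → ‖θ v - θ u‖ < ε) := by
  constructor
  · -- easy direction: τ is continuous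
    intro u _ ε hε
    refine ⟨ε / (‖τ‖ + 1), by positivity, fun v _ hv => ?_⟩
    have h1 : ‖τ (θ v) - τ (θ u)‖ = ‖τ (θ v - θ u)‖ := by rw [map_sub]
    have h2 : ‖τ (θ v - θ u)‖ ≤ ‖τ‖ * ‖θ v - θ u‖ := τ.le_opNorm _
    have h3 : ‖τ‖ * ‖θ v - θ u‖ ≤ (‖τ‖ + 1) * ‖θ v - θ u‖ := by
      apply mul_le_mul_of_nonneg_right (by linarith) (norm_nonneg _)
    have h4 : (‖τ‖ + 1) * ‖θ v - θ u‖ < (‖τ‖ + 1) * (ε / (‖τ‖ + 1)) := by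
      apply mul_lt_mul_of_pos_left hv (by positivity)
    have h5 : (‖τ‖ + 1) * (ε / (‖τ‖ + 1)) = ε := by
      field_simp
    linarith [h1 ▸ (h2.trans h3)]
  · -- hard direction: compactness argument
    intro u hu ε hε
    by_contra hcon
    push_neg at hcon
    -- choose a sequence v n with ‖τ θ v n - τ θ u‖ < 1/(n+1) but ‖θ v n - θ u‖ ≥ ε
    have hseq : ∀ n : ℕ, ∃ v : X, ‖v‖ ≤ 1 ∧ ‖τ (θ v) - τ (θ u)‖ < 1 / (n + 1) ∧
        ε ≤ ‖θ v - θ u‖ := by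
      intro n
      obtain ⟨v, hv1, hv2, hv3⟩ := hcon (1 / (n + 1)) (by positivity)
      exact ⟨v, hv1, hv2, hv3⟩
    choose v hv1 hv2 hv3 using hseq
    -- the image sequence lies in a compact set
    have hK : IsCompact (closure (θ '' Metric.closedBall (0 : X) 1)) :=
      hθcpt _ Metric.isBounded_closedBall
    have hmem : ∀ n, θ (v n) ∈ closure (θ '' Metric.closedBall (0 : X) 1) := by
      intro n
      apply subset_closure
      exact ⟨v n, by simpa [Metric.mem_closedBall] using hv1 n, rfl⟩
    obtain ⟨y, hyK, φ, hφ, hlim⟩ := hK.tendsto_subseq hmem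
    -- τ (θ (v (φ n))) → τ y
    have hτlim : Filter.Tendsto (fun n => τ (θ (v (φ n)))) Filter.atTop (nhds (τ y)) :=
      (τ.continuous.tendsto y).comp hlim
    -- also τ (θ (v n)) → τ (θ u)
    have hτlim2 : Filter.Tendsto (fun n => τ (θ (v n))) Filter.atTop (nhds (τ (θ u))) := by
      rw [tendsto_iff_norm_sub_tendsto_zero]
      apply squeeze_zero (fun n => norm_nonneg _) (fun n => (hv2 n).le)
      exact tendsto_one_div_add_atTop_nhds_zero_nat
    have hτlim2' : Filter.Tendsto (fun n => τ (θ (v (φ n)))) Filter.atTop (nhds (τ (θ u))) :=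
      hτlim2.comp hφ.tendsto_atTop
    have hy : τ y = τ (θ u) := tendsto_nhds_unique hτlim hτlim2'
    have hy' : y = θ u := hτinj hy
    rw [hy'] at hlim
    -- contradiction with ε ≤ ‖θ (v (φ n)) - θ u‖
    have : Filter.Tendsto (fun n => ‖θ (v (φ n)) - θ u‖) Filter.atTop (nhds 0) := by
      rw [← tendsto_iff_norm_sub_tendsto_zero]
      exact hlim
    obtain ⟨n, hn⟩ := (this.eventually (gt_mem_nhds hε)).exists
    exact absurd (hv3 (φ n)) (not_le.mpr hn)
end

section
/- Let (X, ‖·‖_X) be a reflexive normed space, (Y, ‖·‖_Y) a normed space, and T : X → Y a linear completely continuous operator (i.e., T maps every weakly convergent sequence in X to a norm-convergent sequence in Y). Let |·|_X be another norm on X which is weaker than ‖·‖_X, i.e., there exists C > 0 with |u|_X ≤ C‖u‖_X for all u ∈ X, and set B := {u ∈ X : ‖u‖_X ≤ 1}. Then the restriction T|_B : (B, |·|_X) → (Y, ‖·‖_Y) is continuous, where B carries the metric induced by |·|_X. -/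
open Filter Topology NormedSpace

/-- Hahn–Banach for the seminorm `n`: for `x ≠ 0` there is a linear functional `g`
with `g x = n x` and `|g y| ≤ n y` for all `y`. -/
theorem brezis_aux_hb {X : Type*} [NormedAddCommGroup X] [NormedSpace ℝ X]
    (n : X → ℝ)
    (hnsmul : ∀ (a : ℝ) (u : X), n (a • u) = |a| * n u)
    (hnadd : ∀ u v : X, n (u + v) ≤ n u + n v)
    (hnn : ∀ u : X, 0 ≤ n u)
    (x : X) (hx : x ≠ 0) :
    ∃ g : X →ₗ[ℝ] ℝ, (∀ y, |g y| ≤ n y) ∧ g x = n x := by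
  have H : ∀ c : ℝ, c • x = 0 → c • (n x) = 0 := by
    intro c hc
    rcases smul_eq_zero.mp hc with h | h
    · simp [h]
    · exact absurd h hx
  set f : X →ₗ.[ℝ] ℝ := LinearPMap.mkSpanSingleton' x (n x) H with hf
  have hdom : f.domain = Submodule.span ℝ {x} := rfl
  obtain ⟨g, hg1, hg2⟩ := exists_extension_of_le_sublinear f n
    (fun c hc y => by rw [hnsmul, abs_of_pos hc])
    hnadd
    (by
      rintro ⟨z, hz⟩
      rw [hdom] at hz
      obtain ⟨c, rfl⟩ := Submodule.mem_span_singleton.mp hz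
      have : f ⟨c • x, hz⟩ = c • (n x) := LinearPMap.mkSpanSingleton'_apply x (n x) H c _
      rw [this]
      calc c • (n x) = c * n x := rfl
        _ ≤ |c| * n x := mul_le_mul_of_nonneg_right (le_abs_self c) (hnn x)
        _ = n (c • x) := (hnsmul c x).symm)
  refine ⟨g, fun y => ?_, ?_⟩
  · rcases abs_cases (g y) with ⟨h, _⟩ | ⟨h, _⟩
    · rw [h]; exact hg2 y
    · rw [h, ← map_neg]
      have := hg2 (-y)
      have hn : n (-y) = n y := by
        have := hnsmul (-1) y
        simpa using this
      rwa [hn] at this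
  · have hxmem : x ∈ f.domain := by
      rw [hdom]; exact Submodule.mem_span_singleton_self x
    have := hg1 ⟨x, hxmem⟩
    rw [this, LinearPMap.mkSpanSingleton'_apply_self]

/-- **Brezis' example.** Let `X` be a reflexive normed space, `T : X → Y` a
linear completely continuous operator, and `|·|_X` (here `n`) a second norm on `X` dominated
by a constant multiple of `‖·‖_X`. Then the restriction of `T` to the closed unit ball `B`
of `(X, ‖·‖_X)` is continuous from `(B, |·|_X)` to `(Y, ‖·‖_Y)`. -/
theorem brezis_example_continuity
    {X Y : Type*} [NormedAddCommGroup X] [NormedSpace ℝ X]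
    [NormedAddCommGroup Y] [NormedSpace ℝ Y]
    (hrefl : Function.Surjective (NormedSpace.inclusionInDoubleDual ℝ X))
    (T : X →ₗ[ℝ] Y)
    (hT : ∀ (u : ℕ → X) (x : X),
      (∀ φ : StrongDual ℝ X,
        Filter.Tendsto (fun n => φ (u n)) Filter.atTop (nhds (φ x))) →
      Filter.Tendsto (fun n => T (u n)) Filter.atTop (nhds (T x)))
    (n : X → ℝ)
    (hnzero : ∀ u : X, n u = 0 ↔ u = 0)
    (hnsmul : ∀ (a : ℝ) (u : X), n (a • u) = |a| * n u)
    (hnadd : ∀ u v : X, n (u + v) ≤ n u + n v)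
    (C₀ : ℝ) (hC₀ : 0 < C₀) (hdom : ∀ u : X, n u ≤ C₀ * ‖u‖) :
    ∀ u : X, ‖u‖ ≤ 1 → ∀ ε > (0 : ℝ), ∃ δ > (0 : ℝ), ∀ v : X, ‖v‖ ≤ 1 →
      n (v - u) < δ → ‖T v - T u‖ < ε := by
  -- nonnegativity of `n`
  have hnn : ∀ x : X, 0 ≤ n x := by
    intro x
    have h0 : n (0 : X) = 0 := (hnzero 0).mpr rfl
    have h1 : n (x + (-x)) ≤ n x + n (-x) := hnadd x (-x)
    have h2 : n (-x) = n x := by simpa using hnsmul (-1) x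
    rw [add_neg_cancel, h0, h2] at h1
    linarith
  intro u hu ε hε
  by_contra hcon
  push_neg at hcon
  choose v hv1 hv2 hv3 using fun k : ℕ => hcon (1 / (k + 1 : ℝ)) (by positivity)
  -- `n (v k - u) → 0`
  have htend0 : Tendsto (fun k => n (v k - u)) atTop (𝓝 0) :=
    squeeze_zero (fun k => hnn _) (fun k => (hv2 k).le)
      tendsto_one_div_add_atTop_nhds_zero_nat
  set J := NormedSpace.inclusionInDoubleDual ℝ X with hJ
  set g : ℕ → WeakDual ℝ (StrongDual ℝ X) := fun k => StrongDual.toWeakDual (J (v k)) with hg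
  set K : Set (WeakDual ℝ (StrongDual ℝ X)) :=
    WeakDual.toStrongDual ⁻¹' Metric.closedBall 0 1 with hK
  have hKcpt : IsCompact K := WeakDual.isCompact_closedBall 0 1
  have hgK : ∀ k, g k ∈ K := by
    intro k
    have : ‖J (v k)‖ ≤ 1 := le_trans (double_dual_bound ℝ X (v k)) (hv1 k)
    show J (v k) ∈ Metric.closedBall 0 1
    rw [Metric.mem_closedBall]
    exact (dist_zero_right (J (v k))).le.trans this
  -- every cluster point of `g` equals `J u`
  have hcluster : ∀ Φ : WeakDual ℝ (StrongDual ℝ X),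
      ClusterPt Φ (Filter.map g atTop) → Φ = StrongDual.toWeakDual (J u) := by
    intro Φ hΦ
    obtain ⟨w, hw⟩ := hrefl (WeakDual.toStrongDual Φ)
    -- For any functional dominated by `n`, its value at `w` equals its value at `u`.
    have hval : ∀ ψ : StrongDual ℝ X, (∀ y, |ψ y| ≤ n y) → ψ w = ψ u := by
      intro ψ hψ
      have hev : ContinuousAt (fun Ψ : WeakDual ℝ (StrongDual ℝ X) => Ψ ψ) Φ :=
        (WeakDual.eval_continuous ψ).continuousAt
      have hclψ : ClusterPt (Φ ψ) (Filter.map (fun k => (g k) ψ) atTop) := by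
        have := hΦ.map hev (Filter.tendsto_map (f := fun Ψ : WeakDual ℝ (StrongDual ℝ X) => Ψ ψ))
        simpa [Filter.map_map, Function.comp_def] using this
      have hgψ : ∀ k, (g k) ψ = ψ (v k) := fun k => rfl
      have htψ : Tendsto (fun k => ψ (v k)) atTop (𝓝 (ψ u)) := by
        rw [← tendsto_sub_nhds_zero_iff]
        refine squeeze_zero_norm (fun k => ?_) htend0
        have : ψ (v k) - ψ u = ψ (v k - u) := by rw [map_sub]
        rw [this, Real.norm_eq_abs]
        exact hψ (v k - u)
      have hle : Filter.map (fun k => (g k) ψ) atTop ≤ 𝓝 (ψ u) := by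
        exact htψ
      have hne : (𝓝 (Φ ψ) ⊓ 𝓝 (ψ u)).NeBot :=
        hclψ.mono hle
      have hΦψ : Φ ψ = ψ u := eq_of_nhds_neBot hne
      have hΦψ' : Φ ψ = ψ w := by
        have : J w ψ = ψ w := rfl
        rw [← this, hw]; rfl
      rw [← hΦψ', hΦψ]
    have hwu : w = u := by
      by_contra hne
      have hx : w - u ≠ 0 := sub_ne_zero.mpr hne
      obtain ⟨g₀, hg₀1, hg₀2⟩ := brezis_aux_hb n hnsmul hnadd hnn (w - u) hx
      set ψ : StrongDual ℝ X := LinearMap.mkContinuous g₀ C₀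
        (fun y => by
          rw [Real.norm_eq_abs]
          exact (hg₀1 y).trans (hdom y)) with hψdef
      have hψb : ∀ y, |ψ y| ≤ n y := fun y => hg₀1 y
      have := hval ψ hψb
      have hψ0 : ψ (w - u) = 0 := by rw [map_sub, this, sub_self]
      have : n (w - u) = 0 := by
        have : g₀ (w - u) = 0 := hψ0
        rw [← hg₀2, this]
      exact hx ((hnzero _).mp this)
    -- conclude `Φ = J u`
    have : WeakDual.toStrongDual Φ = J u := by rw [← hw, hwu]
    calc Φ = StrongDual.toWeakDual (WeakDual.toStrongDual Φ) := rfl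
      _ = StrongDual.toWeakDual (J u) := by rw [this]
  -- hence `g` converges to `J u` in the weak-* topology
  have htendg : Tendsto g atTop (𝓝 (StrongDual.toWeakDual (J u))) := by
    rw [Tendsto, le_iff_ultrafilter]
    intro U hU
    have hUK : (U : Filter _) ≤ Filter.principal K :=
      hU.trans (by
        rw [Filter.le_principal_iff, Filter.mem_map]
        exact Filter.Eventually.of_forall hgK)
    have hmem : K ∈ U := Filter.le_principal_iff.mp hUK
    obtain ⟨Φ, _, hΦle⟩ := hKcpt.ultrafilter_le_nhds' U hmem
    have hcl : ClusterPt Φ (Filter.map g atTop) :=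
      ClusterPt.mono (ClusterPt.of_le_nhds hΦle) hU
    rw [hcluster Φ hcl] at hΦle
    exact hΦle
  -- weak convergence of `v` to `u`
  have hweak : ∀ φ : StrongDual ℝ X,
      Tendsto (fun k => φ (v k)) atTop (𝓝 (φ u)) := by
    intro φ
    have := ((WeakDual.eval_continuous φ).tendsto _).comp htendg
    exact this
  -- complete continuity
  have hTv : Tendsto (fun k => T (v k)) atTop (𝓝 (T u)) := hT v u hweak
  have : ∀ᶠ k in atTop, ‖T (v k) - T u‖ < ε := by
    have h0 : Tendsto (fun k => ‖T (v k) - T u‖) atTop (𝓝 0) :=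
      tendsto_iff_norm_sub_tendsto_zero.mp hTv
    exact h0.eventually (eventually_lt_nhds hε)
  obtain ⟨k, hk⟩ := this.exists
  exact absurd (hv3 k) (not_le.mpr hk)
end

section
/- Let (X, ‖·‖_X) be a reflexive normed space, (Y, ‖·‖_Y) a normed space, and T : X → Y a linear completely continuous operator. Let |·|_X be another norm on X with |u|_X ≤ C‖u‖_X for all u ∈ X and some C > 0. Then for every ε > 0 there exists a constant C_ε > 0 such that ‖Tu‖_Y ≤ ε‖u‖_X + C_ε|u|_X for all u ∈ X. -/
open Filter Topology NormedSpace

set_option maxHeartbeats 1600000 in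
/-- **Brezis' example, Ehrling form.** Let `X` be a reflexive normed space,
`T : X → Y` a linear completely continuous operator, and `|·|_X` (here `n`) a second norm
on `X` dominated by a constant multiple of `‖·‖_X`. Then `T` is Ehrling continuous with the
pair `(‖·‖_X, |·|_X)`. -/
theorem brezis_example_ehrling
    {X Y : Type*} [NormedAddCommGroup X] [NormedSpace ℝ X]
    [NormedAddCommGroup Y] [NormedSpace ℝ Y]
    (hrefl : Function.Surjective (NormedSpace.inclusionInDoubleDual ℝ X))
    (T : X →ₗ[ℝ] Y)
    (hT : ∀ (u : ℕ → X) (x : X),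
      (∀ φ : StrongDual ℝ X,
        Filter.Tendsto (fun n => φ (u n)) Filter.atTop (nhds (φ x))) →
      Filter.Tendsto (fun n => T (u n)) Filter.atTop (nhds (T x)))
    (n : X → ℝ)
    (hnzero : ∀ u : X, n u = 0 ↔ u = 0)
    (hnsmul : ∀ (a : ℝ) (u : X), n (a • u) = |a| * n u)
    (hnadd : ∀ u v : X, n (u + v) ≤ n u + n v)
    (C₀ : ℝ) (hC₀ : 0 < C₀) (hdom : ∀ u : X, n u ≤ C₀ * ‖u‖) :
    ∀ ε > (0 : ℝ), ∃ C > (0 : ℝ), ∀ u : X, ‖T u‖ ≤ ε * ‖u‖ + C * n u := by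
  intro ε hε
  by_contra hcon
  push_neg at hcon
  -- basic facts about `n`
  have hn0 : n 0 = 0 := (hnzero 0).2 rfl
  have hnneg : ∀ u : X, n (-u) = n u := by
    intro u
    have := hnsmul (-1) u
    simpa using this
  have hnonneg : ∀ u : X, 0 ≤ n u := by
    intro u
    have h1 := hnadd u (-u)
    rw [add_neg_cancel, hn0, hnneg] at h1
    linarith
  -- Hahn-Banach: a norming functional for `n`
  have hHB : ∀ x : X, ∃ φ : StrongDual ℝ X, φ x = n x ∧ ∀ u, |φ u| ≤ n u := by
    intro x
    rcases eq_or_ne x 0 with rfl | hx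
    · exact ⟨0, by simp [hn0], fun u => by simpa using hnonneg u⟩
    · have hf : ∀ y : (LinearPMap.mkSpanSingleton x (n x) hx :
          X →ₗ.[ℝ] ℝ).domain, (LinearPMap.mkSpanSingleton x (n x) hx) y ≤ n y := by
        rintro ⟨y, hy⟩
        obtain ⟨c, rfl⟩ := Submodule.mem_span_singleton.1 hy
        have happ : (LinearPMap.mkSpanSingleton x (n x) hx : X →ₗ.[ℝ] ℝ) ⟨c • x, hy⟩
            = c • n x := LinearPMap.mkSpanSingleton'_apply x (n x) _ c hy
        rw [happ]
        have : c * n x ≤ |c| * n x :=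
          mul_le_mul_of_nonneg_right (le_abs_self c) (hnonneg x)
        calc (c • n x : ℝ) = c * n x := by rw [smul_eq_mul]
          _ ≤ |c| * n x := this
          _ = n (c • x) := (hnsmul c x).symm
      obtain ⟨g, hg1, hg2⟩ := exists_extension_of_le_sublinear
        (LinearPMap.mkSpanSingleton x (n x) hx) n
        (fun c hc u => by rw [hnsmul, abs_of_pos hc]) hnadd hf
      have habs : ∀ u, |g u| ≤ n u := by
        intro u
        rw [abs_le]
        refine ⟨?_, hg2 u⟩
        have h1 := hg2 (-u)
        rw [map_neg, hnneg] at h1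
        linarith
      refine ⟨LinearMap.mkContinuous g C₀ (fun u => ?_), ?_, ?_⟩
      · rw [Real.norm_eq_abs]
        exact (habs u).trans (hdom u)
      · have h1 := hg1 ⟨x, Submodule.mem_span_singleton_self x⟩
        rw [LinearPMap.mkSpanSingleton_apply] at h1
        simpa using h1
      · intro u
        simpa using habs u
  -- T is continuous
  have hTc : Continuous T := by
    apply SeqContinuous.continuous
    intro u p hup
    exact hT u p (fun φ => (φ.continuous.tendsto p).comp hup)
  set Tc : X →L[ℝ] Y := ⟨T, hTc⟩ with hTcdef
  -- extract the bad sequence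
  have hu : ∀ k : ℕ, ∃ u : X, ε * ‖u‖ + ((k : ℝ) + 1) * n u < ‖T u‖ := by
    intro k
    obtain ⟨u, hu⟩ := hcon ((k : ℝ) + 1) (by positivity)
    exact ⟨u, hu⟩
  choose u hu using hu
  have hune : ∀ k, u k ≠ 0 := by
    intro k hk
    have := hu k
    rw [hk] at this
    simp [hn0] at this
  set v : ℕ → X := fun k => ‖u k‖⁻¹ • u k with hvdef
  have hv1 : ∀ k, ‖v k‖ = 1 := by
    intro k
    simpa using norm_smul_inv_norm (𝕜 := ℝ) (hune k)
  have hvk : ∀ k : ℕ, ε + ((k : ℝ) + 1) * n (v k) < ‖T (v k)‖ := by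
    intro k
    have hnu : (0 : ℝ) < ‖u k‖ := norm_pos_iff.2 (hune k)
    have hTv : ‖T (v k)‖ = ‖u k‖⁻¹ * ‖T (u k)‖ := by
      simp [hvdef, map_smul, norm_smul, abs_of_pos (inv_pos.2 hnu)]
    have hnv : n (v k) = ‖u k‖⁻¹ * n (u k) := by
      rw [hvdef]
      simp [hnsmul, abs_of_pos (inv_pos.2 hnu)]
    have key := mul_lt_mul_of_pos_left (hu k) (inv_pos.2 hnu)
    rw [hTv, hnv]
    calc ε + ((k : ℝ) + 1) * (‖u k‖⁻¹ * n (u k))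
        = ‖u k‖⁻¹ * (ε * ‖u k‖ + ((k : ℝ) + 1) * n (u k)) := by
          field_simp
      _ < ‖u k‖⁻¹ * ‖T (u k)‖ := key
  -- n (v k) → 0
  have hTvb : ∀ k, ‖T (v k)‖ ≤ ‖Tc‖ := by
    intro k
    have := Tc.le_opNorm (v k)
    rwa [hv1 k, mul_one] at this
  have hnub : ∀ k : ℕ, n (v k) ≤ ‖Tc‖ / ((k : ℝ) + 1) := by
    intro k
    have h1 := hvk k
    have h2 := hTvb k
    have h3 : (0 : ℝ) < (k : ℝ) + 1 := by positivity
    rw [le_div_iff₀ h3]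
    nlinarith
  have hn0' : Tendsto (fun k => n (v k)) atTop (𝓝 0) := by
    apply squeeze_zero (fun k => hnonneg (v k)) hnub
    have h1 : Tendsto (fun m : ℕ => ‖Tc‖ / (m : ℝ)) atTop (𝓝 0) :=
      tendsto_const_div_atTop_nhds_zero_nat ‖Tc‖
    have h2 := h1.comp (tendsto_add_atTop_nat 1)
    convert h2 using 2 with k
    simp
  -- the weak-star picture in the double dual
  set ι := NormedSpace.inclusionInDoubleDual ℝ X with hι
  set w : ℕ → WeakDual ℝ (StrongDual ℝ X) := fun k => (ι (v k) : StrongDual ℝ (StrongDual ℝ X)) with hw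
  set K : Set (WeakDual ℝ (StrongDual ℝ X)) :=
    WeakDual.toStrongDual ⁻¹' Metric.closedBall 0 1 with hK
  have hKc : IsCompact K := WeakDual.isCompact_closedBall (𝕜 := ℝ) (0 : StrongDual ℝ (StrongDual ℝ X)) 1
  have hwK : ∀ k, w k ∈ K := by
    intro k
    have h2 : ‖ι (v k)‖ ≤ ‖v k‖ := double_dual_bound ℝ X (v k)
    have h3 : ‖ι (v k)‖ ≤ 1 := h2.trans (hv1 k).le
    have h4 : WeakDual.toStrongDual (w k) ∈ Metric.closedBall (0 : StrongDual ℝ (StrongDual ℝ X)) 1 := by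
      exact (mem_closedBall_zero_iff (E := StrongDual ℝ (StrongDual ℝ X))).2 h3
    exact h4
  -- every cluster point of `w` is 0
  have hcl : ∀ F ∈ K, MapClusterPt F atTop w → F = (0 : WeakDual ℝ (StrongDual ℝ X)) := by
    intro F _ hF
    obtain ⟨x, hx⟩ := hrefl F
    obtain ⟨φ, hφx, hφle⟩ := hHB x
    -- φ (v k) → 0
    have hφ0 : Tendsto (fun k => φ (v k)) atTop (𝓝 0) := by
      apply squeeze_zero_norm (fun k => ?_) hn0'
      rw [Real.norm_eq_abs]
      exact hφle (v k)
    -- F φ is a cluster point of φ (v k)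
    have h1 : MapClusterPt (F φ) atTop (fun k => (w k) φ) :=
      hF.continuousAt_comp (WeakDual.eval_continuous φ).continuousAt
    have h2 : (fun k => (w k) φ) = fun k => φ (v k) := rfl
    rw [h2] at h1
    have h3 : F φ = 0 := by
      have hne : (𝓝 (F φ) ⊓ map (fun k => φ (v k)) atTop).NeBot := h1
      have : (𝓝 (F φ) ⊓ 𝓝 (0 : ℝ)).NeBot :=
        hne.mono (inf_le_inf_left _ hφ0)
      exact eq_of_nhds_neBot this
    have hFx : F φ = φ x := by rw [← hx]; rfl
    have hnx : n x = 0 := by rw [← hφx, ← hFx, h3]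
    have hx0 : x = 0 := (hnzero x).1 hnx
    rw [← hx, hx0, map_zero]
    rfl
  -- weak-star convergence of `w` to 0
  have hconv : Tendsto w atTop (𝓝 (0 : WeakDual ℝ (StrongDual ℝ X))) :=
    hKc.tendsto_nhds_of_unique_mapClusterPt (Eventually.of_forall hwK) hcl
  -- hence weak convergence of `v` to 0
  have hweak : ∀ φ : StrongDual ℝ X, Tendsto (fun k => φ (v k)) atTop (𝓝 (φ (0 : X))) := by
    intro φ
    have := ((WeakDual.eval_continuous φ).tendsto (0 : WeakDual ℝ (StrongDual ℝ X))).comp hconv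
    rw [map_zero]
    exact this
  have hTv0 : Tendsto (fun k => T (v k)) atTop (𝓝 (T 0)) := hT v 0 hweak
  rw [map_zero] at hTv0
  have hTnorm : Tendsto (fun k => ‖T (v k)‖) atTop (𝓝 0) := by
    simpa using hTv0.norm
  have hεle : ε ≤ 0 := by
    apply ge_of_tendsto hTnorm
    filter_upwards with k
    have h1 := hvk k
    have h2 : 0 ≤ ((k : ℝ) + 1) * n (v k) :=
      mul_nonneg (by positivity) (hnonneg _)
    linarith
  linarith
end

section
/- Let (X, ‖·‖_X) be a normed space whose dual X* is separable, let Φ = (φ_k)_{k≥1} be a sequence dense in the closed unit ball of X*, and let |u|_Φ := Σ_{k=1}^∞ 2^{−k}|⟨φ_k, u⟩|. Let (Y, ‖·‖_Y) be a normed space and T : X → Y a linear completely continuous operator. Then for every ε > 0 there exists a constant C_ε > 0 such that ‖Tu‖_Y ≤ ε‖u‖_X + C_ε|u|_Φ for all u ∈ X. -/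
open Filter Topology


/-- The very weak norm associated with a sequence `Φ` in the dual:
`|u|_Φ = Σ_{k=1}^∞ 2^{-k} |⟨φ_k, u⟩|` (indexed here from `k = 0` with weight `2^{-(k+1)}`). -/
noncomputable def veryWeakNorm {X : Type*} [NormedAddCommGroup X] [NormedSpace ℝ X]
    (Φ : ℕ → StrongDual ℝ X) (u : X) : ℝ :=
  ∑' k : ℕ, (2 : ℝ)⁻¹ ^ (k + 1) * |Φ k u|

lemma vwn_summable {X : Type*} [NormedAddCommGroup X] [NormedSpace ℝ X]
    (Φ : ℕ → StrongDual ℝ X) (hΦball : ∀ k, ‖Φ k‖ ≤ 1) (u : X) :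
    Summable (fun k : ℕ => (2 : ℝ)⁻¹ ^ (k + 1) * |Φ k u|) := by
  refine Summable.of_nonneg_of_le (fun k => by positivity) (fun k => ?_)
    (((summable_geometric_of_lt_one (by norm_num : (0:ℝ) ≤ 2⁻¹)
      (by norm_num)).mul_right ‖u‖))
  have h1 : |Φ k u| ≤ ‖u‖ := by
    calc |Φ k u| = ‖Φ k u‖ := (Real.norm_eq_abs _).symm
    _ ≤ ‖Φ k‖ * ‖u‖ := (Φ k).le_opNorm u
    _ ≤ 1 * ‖u‖ := by gcongr; exact hΦball k
    _ = ‖u‖ := one_mul _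
  have h2 : (2 : ℝ)⁻¹ ^ (k + 1) ≤ (2 : ℝ)⁻¹ ^ k :=
    pow_le_pow_of_le_one (by norm_num) (by norm_num) (Nat.le_succ k)
  exact mul_le_mul h2 h1 (abs_nonneg _) (by positivity)

lemma vwn_nonneg {X : Type*} [NormedAddCommGroup X] [NormedSpace ℝ X]
    (Φ : ℕ → StrongDual ℝ X) (u : X) : 0 ≤ veryWeakNorm Φ u :=
  tsum_nonneg fun k => by positivity

lemma vwn_term_le {X : Type*} [NormedAddCommGroup X] [NormedSpace ℝ X]
    (Φ : ℕ → StrongDual ℝ X) (hΦball : ∀ k, ‖Φ k‖ ≤ 1) (u : X) (k : ℕ) :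
    |Φ k u| ≤ 2 ^ (k + 1) * veryWeakNorm Φ u := by
  have h := Summable.le_tsum (vwn_summable Φ hΦball u) k (fun i _ => by positivity)
  calc |Φ k u| = (2 : ℝ) ^ (k + 1) * ((2 : ℝ)⁻¹ ^ (k + 1) * |Φ k u|) := by
        rw [← mul_assoc, ← mul_pow]; norm_num
  _ ≤ 2 ^ (k + 1) * veryWeakNorm Φ u := by gcongr; exact h

lemma vwn_smul {X : Type*} [NormedAddCommGroup X] [NormedSpace ℝ X]
    (Φ : ℕ → StrongDual ℝ X) (c : ℝ) (u : X) :
    veryWeakNorm Φ (c • u) = |c| * veryWeakNorm Φ u := by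
  unfold veryWeakNorm
  rw [← tsum_mul_left]
  congr 1; ext k
  rw [map_smul]
  simp [abs_mul]
  ring

/-- Every completely continuous linear operator `T : X → Y`, where the
dual of `X` is separable, is Ehrling continuous with the pair `(‖·‖_X, |·|_Φ)`. -/
theorem completelyContinuous_ehrling
    {X Y : Type*} [NormedAddCommGroup X] [NormedSpace ℝ X]
    [NormedAddCommGroup Y] [NormedSpace ℝ Y]
    [TopologicalSpace.SeparableSpace (StrongDual ℝ X)]
    (Φ : ℕ → StrongDual ℝ X)
    (hΦball : ∀ k, ‖Φ k‖ ≤ 1)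
    (hΦdense : ∀ φ : StrongDual ℝ X, ‖φ‖ ≤ 1 → φ ∈ closure (Set.range Φ))
    (T : X →ₗ[ℝ] Y)
    (hT : ∀ (u : ℕ → X) (x : X),
      (∀ φ : StrongDual ℝ X,
        Filter.Tendsto (fun n => φ (u n)) Filter.atTop (nhds (φ x))) →
      Filter.Tendsto (fun n => T (u n)) Filter.atTop (nhds (T x))) :
    ∀ ε > (0 : ℝ), ∃ C > (0 : ℝ), ∀ u : X, ‖T u‖ ≤ ε * ‖u‖ + C * veryWeakNorm Φ u := by
  intro ε hε
  by_contra h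
  push_neg at h
  choose u hu using fun n : ℕ => h ((n : ℝ) + 1) (by positivity)
  -- hu n : ε * ‖u n‖ + (n+1) * vwn (u n) < ‖T (u n)‖
  have ha : ∀ n, 0 < ‖T (u n)‖ := fun n =>
    lt_of_le_of_lt (add_nonneg (by positivity)
      (mul_nonneg (by positivity) (vwn_nonneg Φ (u n)))) (hu n)
  set w : ℕ → X := fun n => (‖T (u n)‖)⁻¹ • u n with hw
  have hTw : ∀ n, ‖T (w n)‖ = 1 := by
    intro n
    simp only [hw, map_smul, norm_smul, norm_inv, norm_norm]
    exact inv_mul_cancel₀ (ha n).ne'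
  have hineq1 : ∀ n, ε * ‖u n‖ ≤ ‖T (u n)‖ := fun n =>
    le_trans (le_add_of_nonneg_right
      (mul_nonneg (by positivity) (vwn_nonneg Φ (u n)))) (hu n).le
  have hineq2 : ∀ n : ℕ, ((n : ℝ) + 1) * veryWeakNorm Φ (u n) ≤ ‖T (u n)‖ := fun n =>
    le_trans (le_add_of_nonneg_left (by positivity)) (hu n).le
  have hwnorm : ∀ n, ‖w n‖ ≤ ε⁻¹ := by
    intro n
    have h1 := hineq1 n
    have h2 := ha n
    rw [hw]
    simp only [norm_smul, norm_inv, norm_norm]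
    rw [inv_mul_eq_div, inv_eq_one_div, div_le_div_iff₀ h2 hε]
    nlinarith
  have hwvwn : ∀ n, veryWeakNorm Φ (w n) ≤ 1 / ((n : ℝ) + 1) := by
    intro n
    have h1 := hineq2 n
    have h2 := ha n
    rw [hw]
    simp only []
    rw [vwn_smul, abs_inv, abs_norm, inv_mul_eq_div,
      div_le_div_iff₀ h2 (by positivity : (0:ℝ) < (n:ℝ)+1)]
    nlinarith
  have hvlim : Tendsto (fun n => veryWeakNorm Φ (w n)) atTop (nhds 0) := by
    apply squeeze_zero (fun n => vwn_nonneg Φ (w n)) hwvwn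
    exact tendsto_one_div_add_atTop_nhds_zero_nat
  have hweak : ∀ φ : StrongDual ℝ X,
      Tendsto (fun n => φ (w n)) atTop (nhds (φ (0 : X))) := by
    intro φ
    rw [map_zero]
    rcases eq_or_ne φ 0 with rfl | hφ
    · simpa using (tendsto_const_nhds : Tendsto (fun _ : ℕ => (0:ℝ)) atTop (nhds 0))
    have hφpos : 0 < ‖φ‖ := norm_pos_iff.2 hφ
    rw [Metric.tendsto_atTop]
    intro δ hδ
    set ψ : StrongDual ℝ X := ‖φ‖⁻¹ • φ with hψ
    have hψnorm : ‖ψ‖ = 1 := by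
      rw [hψ, norm_smul, norm_inv, norm_norm, inv_mul_cancel₀ hφpos.ne']
    have hmem := hΦdense ψ hψnorm.le
    rw [Metric.mem_closure_iff] at hmem
    set r : ℝ := δ * ε / (2 * ‖φ‖) with hr
    have hrpos : 0 < r := by positivity
    obtain ⟨b, ⟨k, rfl⟩, hb⟩ := hmem r hrpos
    -- dist ψ (Φ k) < r
    have hbound : ∀ n, |φ (w n)| ≤ ‖φ‖ * 2 ^ (k + 1) * veryWeakNorm Φ (w n) + δ / 2 := by
      intro n
      have h1 : φ (w n) = ‖φ‖ * ψ (w n) := by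
        rw [hψ]
        simp only [ContinuousLinearMap.coe_smul', Pi.smul_apply, smul_eq_mul]
        rw [← mul_assoc, mul_inv_cancel₀ hφpos.ne', one_mul]
      have h2 : |ψ (w n)| ≤ |Φ k (w n)| + |(ψ - Φ k) (w n)| := by
        have : ψ (w n) = Φ k (w n) + (ψ - Φ k) (w n) := by simp
        rw [this]; exact abs_add_le _ _
      have h3 : |(ψ - Φ k) (w n)| ≤ r * ε⁻¹ := by
        calc |(ψ - Φ k) (w n)| = ‖(ψ - Φ k) (w n)‖ := (Real.norm_eq_abs _).symm
        _ ≤ ‖ψ - Φ k‖ * ‖w n‖ := (ψ - Φ k).le_opNorm _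
        _ ≤ r * ε⁻¹ := by
            apply mul_le_mul _ (hwnorm n) (norm_nonneg _) hrpos.le
            rw [← dist_eq_norm]; exact hb.le
      have h4 : |Φ k (w n)| ≤ 2 ^ (k + 1) * veryWeakNorm Φ (w n) :=
        vwn_term_le Φ hΦball (w n) k
      have h5 : ‖φ‖ * (r * ε⁻¹) = δ / 2 := by
        rw [hr]; field_simp
      calc |φ (w n)| = ‖φ‖ * |ψ (w n)| := by rw [h1, abs_mul, abs_of_pos hφpos]
      _ ≤ ‖φ‖ * (2 ^ (k + 1) * veryWeakNorm Φ (w n) + r * ε⁻¹) := by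
          apply mul_le_mul_of_nonneg_left _ hφpos.le
          exact le_trans h2 (add_le_add h4 h3)
      _ = ‖φ‖ * 2 ^ (k + 1) * veryWeakNorm Φ (w n) + ‖φ‖ * (r * ε⁻¹) := by ring
      _ = ‖φ‖ * 2 ^ (k + 1) * veryWeakNorm Φ (w n) + δ / 2 := by rw [h5]
    have hsmall : ∀ᶠ n in atTop, ‖φ‖ * 2 ^ (k + 1) * veryWeakNorm Φ (w n) < δ / 2 := by
      have := (hvlim.const_mul (‖φ‖ * 2 ^ (k + 1)))
      simp only [mul_zero] at this
      exact (tendsto_order.1 this).2 (δ / 2) (by positivity)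
    obtain ⟨N, hN⟩ := eventually_atTop.1 hsmall
    refine ⟨N, fun n hn => ?_⟩
    rw [Real.dist_eq, sub_zero]
    calc |φ (w n)| ≤ ‖φ‖ * 2 ^ (k + 1) * veryWeakNorm Φ (w n) + δ / 2 := hbound n
    _ < δ / 2 + δ / 2 := by linarith [hN n hn]
    _ = δ := by ring
  have hTlim := hT w 0 hweak
  rw [map_zero] at hTlim
  have : Tendsto (fun n => ‖T (w n)‖) atTop (nhds 0) := by
    simpa using hTlim.norm
  have := (tendsto_order.1 this).2 1 (by norm_num)
  obtain ⟨N, hN⟩ := eventually_atTop.1 this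
  have := hN N le_rfl
  rw [hTw N] at this
  exact lt_irrefl _ this
end

section
/- Let (X, ‖·‖_X) be a normed space whose dual X* is separable, let Φ = (φ_k)_{k≥1} be a sequence dense in the closed unit ball of X*, and let |u|_Φ := Σ_{k=1}^∞ 2^{−k}|⟨φ_k, u⟩|. Let (Y, ‖·‖_Y) be a normed space and let T : X → Y be a linear operator such that for every ε > 0 there exists C_ε > 0 with ‖Tu‖_Y ≤ ε‖u‖_X + C_ε|u|_Φ for all u ∈ X. Then T is completely continuous: for every sequence (uₙ) converging weakly to u in X, (Tuₙ) converges to Tu in the norm of Y. -/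
/-- Conversely, a linear operator `T : X → Y` satisfying the Ehrling type
inequality with the pair `(‖·‖_X, |·|_Φ)` is completely continuous. -/
theorem completelyContinuous_of_ehrling
    {X Y : Type*} [NormedAddCommGroup X] [NormedSpace ℝ X]
    [NormedAddCommGroup Y] [NormedSpace ℝ Y]
    [TopologicalSpace.SeparableSpace (StrongDual ℝ X)]
    (Φ : ℕ → StrongDual ℝ X)
    (hΦball : ∀ k, ‖Φ k‖ ≤ 1)
    (hΦdense : ∀ φ : StrongDual ℝ X, ‖φ‖ ≤ 1 → φ ∈ closure (Set.range Φ))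
    (T : X →ₗ[ℝ] Y)
    (hEhrling : ∀ ε > (0 : ℝ), ∃ C > (0 : ℝ), ∀ u : X,
      ‖T u‖ ≤ ε * ‖u‖ + C * veryWeakNorm Φ u) :
    ∀ (u : ℕ → X) (x : X),
      (∀ φ : StrongDual ℝ X,
        Filter.Tendsto (fun n => φ (u n)) Filter.atTop (nhds (φ x))) →
      Filter.Tendsto (fun n => T (u n)) Filter.atTop (nhds (T x)) := by
  intro u x hw
  simp only [veryWeakNorm] at hEhrling
  -- uniform boundedness
  set g : ℕ → StrongDual ℝ X →L[ℝ] ℝ :=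
    fun n => NormedSpace.inclusionInDoubleDual ℝ X (u n) with hg
  obtain ⟨M, hM⟩ := banach_steinhaus (g := g) (by
    intro φ
    have h : Filter.Tendsto (fun n => ‖g n φ‖) Filter.atTop (nhds ‖φ x‖) := by
      simpa [hg, NormedSpace.inclusionInDoubleDual] using (hw φ).norm
    obtain ⟨C, hC⟩ := h.bddAbove_range
    exact ⟨C, fun n => hC ⟨n, rfl⟩⟩)
  have hub : ∀ n, ‖u n‖ ≤ M := by
    intro n
    have := (NormedSpace.inclusionInDoubleDualLi (𝕜 := ℝ) (E := X)).norm_map (u n)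
    rw [← this]; exact hM n
  have hMx : ∀ n, ‖u n - x‖ ≤ M + ‖x‖ := fun n =>
    (norm_sub_le _ _).trans (by linarith [hub n])
  -- very weak norm of u n - x tends to 0
  have hvw : Filter.Tendsto (fun n => ∑' k : ℕ, (2:ℝ)⁻¹ ^ (k+1) * |Φ k (u n - x)|)
      Filter.atTop (nhds 0) := by
    have h0 : (0:ℝ) = ∑' k : ℕ, (fun k : ℕ => (0:ℝ)) k := by simp
    rw [h0]
    apply tendsto_tsum_of_dominated_convergence
      (bound := fun k : ℕ => (2:ℝ)⁻¹ ^ (k+1) * (M + ‖x‖))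
    · have hs : Summable (fun k : ℕ => (2:ℝ)⁻¹ ^ k) :=
        summable_geometric_of_lt_one (by norm_num) (by norm_num)
      exact ((hs.mul_left (2:ℝ)⁻¹).mul_right (M + ‖x‖)).congr (fun k => by ring)
    · intro k
      have : Filter.Tendsto (fun n => Φ k (u n - x)) Filter.atTop (nhds 0) := by
        simpa [map_sub] using ((hw (Φ k)).sub_const (Φ k x))
      have := this.abs.const_mul ((2:ℝ)⁻¹ ^ (k+1))
      simpa using this
    · filter_upwards with n k
      have h1 : |Φ k (u n - x)| ≤ ‖u n - x‖ := by
        calc |Φ k (u n - x)| ≤ ‖Φ k‖ * ‖u n - x‖ := (Φ k).le_opNorm _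
        _ ≤ 1 * ‖u n - x‖ := by
            exact mul_le_mul_of_nonneg_right (hΦball k) (norm_nonneg _)
        _ = ‖u n - x‖ := one_mul _
      have h2 : ‖(2:ℝ)⁻¹ ^ (k+1) * |Φ k (u n - x)|‖ = (2:ℝ)⁻¹ ^ (k+1) * |Φ k (u n - x)| := by
        rw [Real.norm_eq_abs, abs_of_nonneg]; positivity
      rw [h2]
      exact mul_le_mul_of_nonneg_left (h1.trans (hMx n)) (by positivity)
  -- conclude
  have hMnn : (0:ℝ) ≤ M := (norm_nonneg (u 0)).trans (hub 0)
  rw [tendsto_iff_norm_sub_tendsto_zero]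
  rw [Metric.tendsto_atTop] at hvw ⊢
  intro ε hε
  obtain ⟨C, hC, hCle⟩ := hEhrling (ε / (2 * (M + ‖x‖ + 1)))
    (div_pos hε (by nlinarith [norm_nonneg x]))
  obtain ⟨N, hN⟩ := hvw (ε / (2 * C)) (div_pos hε (by linarith))
  refine ⟨N, fun n hn => ?_⟩
  have key := hCle (u n - x)
  rw [map_sub] at key
  have hApos : (0:ℝ) < M + ‖x‖ + 1 := by nlinarith [norm_nonneg x]
  have h1 : ε / (2 * (M + ‖x‖ + 1)) * ‖u n - x‖ ≤ ε / 2 := by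
    have hd : (0:ℝ) < ε / (2 * (M + ‖x‖ + 1)) := div_pos hε (by linarith)
    calc ε / (2 * (M + ‖x‖ + 1)) * ‖u n - x‖
        ≤ ε / (2 * (M + ‖x‖ + 1)) * (M + ‖x‖ + 1) :=
          mul_le_mul_of_nonneg_left ((hMx n).trans (by linarith)) hd.le
      _ = ε / 2 := by
          rw [div_mul_eq_mul_div, mul_comm (2:ℝ), ← div_div,
            mul_div_assoc, div_self hApos.ne', mul_one]
  have h2 := hN n hn
  rw [Real.dist_eq, sub_zero, abs_of_nonneg (tsum_nonneg fun k => by positivity)] at h2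
  have h3 : C * (∑' k : ℕ, (2:ℝ)⁻¹ ^ (k+1) * |Φ k (u n - x)|) < ε / 2 := by
    calc C * _ < C * (ε / (2 * C)) := by exact mul_lt_mul_of_pos_left h2 hC
    _ = ε / 2 := by field_simp
  rw [Real.dist_eq, sub_zero, abs_of_nonneg (norm_nonneg _)]
  calc ‖T (u n) - T x‖ ≤ _ := key
  _ < ε / 2 + ε / 2 := by exact add_lt_add_of_le_of_lt h1 h3
  _ = ε := by ring
end
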